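/- Let f = h + conj(g) be a sense-preserving harmonic mapping on 𝔻 with dilatation ω, and suppose f is the horizontal shear of φ, where φ is holomorphic, injective and starlike on 𝔻 with φ(0) = 0, φ'(0) = 1 (i.e. Re(zφ'(z)/φ(z)) > 0 for z ≠ 0). Then for every α ∈ (0, 1], the harmonic mapping F_α = H + conj(G) is injective on 𝔻 and its image F_α(𝔻) is convex in the horizontal direction, i.e. the intersection of F_α(𝔻) with every line parallel to the real axis is connected. -/

import Mathlib

open Set Filter Metric Complex Topology Real

noncomputable section

namespace Stmt14Aux

/-- Hypotheses on the function being lifted. -/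
structure Hyp (f f' : ℂ → ℂ) : Prop where
  hd : ∀ z ∈ Metric.ball (0:ℂ) 1, HasDerivAt f (f' z) z
  hne : ∀ z ∈ Metric.ball (0:ℂ) 1, f' z ≠ 0
  hcont : ContinuousOn f' (Metric.ball (0:ℂ) 1)

variable {f f' : ℂ → ℂ}

theorem Hyp.diffOn (hyp : Hyp f f') : DifferentiableOn ℂ f (Metric.ball (0:ℂ) 1) :=
  fun z hz => ((hyp.hd z hz).differentiableAt).differentiableWithinAt

theorem Hyp.contOn (hyp : Hyp f f') : ContinuousOn f (Metric.ball (0:ℂ) 1) :=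
  hyp.diffOn.continuousOn

/-- local homeomorphism structure of `f` around any point of the ball -/
theorem Hyp.partialHomeo (hyp : Hyp f f') {z : ℂ} (hz : z ∈ Metric.ball (0:ℂ) 1) :
    ∃ e : OpenPartialHomeomorph ℂ ℂ, z ∈ e.source ∧ e.source ⊆ Metric.ball (0:ℂ) 1 ∧
      (e : ℂ → ℂ) = f := by
  have han : AnalyticAt ℂ f z :=
    hyp.diffOn.analyticAt (Metric.isOpen_ball.mem_nhds hz)
  have hstrict : HasStrictDerivAt f (f' z) z := by
    have h1 := han.hasStrictFDerivAt
    have h2 : deriv f z = f' z := (hyp.hd z hz).deriv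
    have h3 : HasStrictDerivAt f (deriv f z) z := by
      simpa [hasStrictDerivAt_iff_hasStrictFDerivAt, ContinuousLinearMap.smulRight,
        fderiv_apply_one_eq_deriv] using h1.hasStrictDerivAt
    rwa [h2] at h3
  have hioeq := hstrict.hasStrictFDerivAt_equiv (hyp.hne z hz)
  set e0 := HasStrictFDerivAt.toOpenPartialHomeomorph f hioeq with he0
  refine ⟨e0.restr (Metric.ball (0:ℂ) 1), ?_, ?_, rfl⟩
  · simp only [OpenPartialHomeomorph.restr_source, Metric.isOpen_ball.interior_eq]
    exact ⟨HasStrictFDerivAt.mem_toOpenPartialHomeomorph_source hioeq, hz⟩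
  · simp only [OpenPartialHomeomorph.restr_source, Metric.isOpen_ball.interior_eq]
    exact inter_subset_right

/-- A lift of the straight line `t ↦ f z₀ + t v` through `f`, starting at `z₀`. -/
def IsLift (f : ℂ → ℂ) (z₀ v : ℂ) (t : ℝ) (γ : ℝ → ℂ) : Prop :=
  ContinuousOn γ (Icc 0 t) ∧ γ 0 = z₀ ∧
    ∀ s ∈ Icc 0 t, γ s ∈ Metric.ball (0:ℂ) 1 ∧ f (γ s) = f z₀ + (s:ℂ) * v

theorem IsLift.restrict {z₀ v : ℂ} {t t' : ℝ} {γ : ℝ → ℂ} (h : IsLift f z₀ v t γ)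
    (ht' : t' ∈ Icc 0 t) : IsLift f z₀ v t' γ := by
  have hsub : Icc (0:ℝ) t' ⊆ Icc 0 t := Icc_subset_Icc le_rfl ht'.2
  exact ⟨h.1.mono hsub, h.2.1, fun s hs => h.2.2 s (hsub hs)⟩

/-- uniqueness of lifts -/
theorem lift_unique (hyp : Hyp f f') {z₀ v : ℂ} {t : ℝ} {γ₁ γ₂ : ℝ → ℂ}
    (h₁ : IsLift f z₀ v t γ₁) (h₂ : IsLift f z₀ v t γ₂) {s : ℝ} (hs : s ∈ Icc 0 t) :
    γ₁ s = γ₂ s := by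
  by_contra hne
  have hopen : ∀ u ∈ Icc (0:ℝ) t, ∃ U : Set ℝ, IsOpen U ∧ u ∈ U ∧
      ((γ₁ u = γ₂ u ∧ ∀ w ∈ U ∩ Icc 0 t, γ₁ w = γ₂ w) ∨
       (γ₁ u ≠ γ₂ u ∧ ∀ w ∈ U ∩ Icc 0 t, γ₁ w ≠ γ₂ w)) := by
    intro u hu
    by_cases heq : γ₁ u = γ₂ u
    · obtain ⟨e, hze, hsub, hecoe⟩ := hyp.partialHomeo (h₁.2.2 u hu).1
      have h2src : γ₂ u ∈ e.source := by rw [← heq]; exact hze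
      have h1ev : ∀ᶠ w in 𝓝[Icc 0 t] u, γ₁ w ∈ e.source :=
        (h₁.1 u hu) (e.open_source.mem_nhds hze)
      have h2ev : ∀ᶠ w in 𝓝[Icc 0 t] u, γ₂ w ∈ e.source :=
        (h₂.1 u hu) (e.open_source.mem_nhds h2src)
      have hev := eventually_nhdsWithin_iff.mp (h1ev.and h2ev)
      obtain ⟨U, hU, hUopen, hUmem⟩ := _root_.eventually_nhds_iff.mp hev
      refine ⟨U, hUopen, hUmem, Or.inl ⟨heq, fun w hw => ?_⟩⟩
      obtain ⟨hw1, hw2⟩ := hU w hw.1 hw.2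
      apply e.injOn hw1 hw2
      have e1 : e (γ₁ w) = f (γ₁ w) := by rw [hecoe]
      have e2 : e (γ₂ w) = f (γ₂ w) := by rw [hecoe]
      rw [e1, e2, (h₁.2.2 w hw.2).2, (h₂.2.2 w hw.2).2]
    · have hcw : ContinuousWithinAt (fun w => γ₁ w - γ₂ w) (Icc 0 t) u :=
        (h₁.1 u hu).sub (h₂.1 u hu)
      have hne0 : γ₁ u - γ₂ u ≠ 0 := sub_ne_zero.mpr heq
      have hev : ∀ᶠ w in 𝓝[Icc 0 t] u, γ₁ w - γ₂ w ≠ 0 :=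
        hcw (isOpen_compl_singleton.mem_nhds hne0)
      obtain ⟨U, hU, hUopen, hUmem⟩ := _root_.eventually_nhds_iff.mp (eventually_nhdsWithin_iff.mp hev)
      exact ⟨U, hUopen, hUmem, Or.inr ⟨heq, fun w hw => sub_ne_zero.mp (hU w hw.1 hw.2)⟩⟩
  choose! U hUopen hUmem hUspec using hopen
  set uS : Set ℝ := ⋃ w ∈ {w ∈ Icc 0 t | γ₁ w = γ₂ w}, U w with huS
  set vS : Set ℝ := ⋃ w ∈ {w ∈ Icc 0 t | γ₁ w ≠ γ₂ w}, U w with hvS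
  have huSopen : IsOpen uS := isOpen_biUnion fun w hw => hUopen w hw.1
  have hvSopen : IsOpen vS := isOpen_biUnion fun w hw => hUopen w hw.1
  have hcover : Icc 0 t ⊆ uS ∪ vS := by
    intro w hw
    by_cases h : γ₁ w = γ₂ w
    · exact Or.inl (mem_biUnion ⟨hw, h⟩ (hUmem w hw))
    · exact Or.inr (mem_biUnion ⟨hw, h⟩ (hUmem w hw))
  have hu_agree : ∀ w ∈ uS ∩ Icc 0 t, γ₁ w = γ₂ w := by
    rintro w ⟨hwu, hwI⟩
    obtain ⟨a, ha, hwa⟩ := mem_iUnion₂.mp hwu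
    rcases hUspec a ha.1 with ⟨_, hspec⟩ | ⟨hne', _⟩
    · exact hspec w ⟨hwa, hwI⟩
    · exact absurd ha.2 hne'
  have hv_ne : ∀ w ∈ vS ∩ Icc 0 t, γ₁ w ≠ γ₂ w := by
    rintro w ⟨hwv, hwI⟩
    obtain ⟨a, ha, hwa⟩ := mem_iUnion₂.mp hwv
    rcases hUspec a ha.1 with ⟨heq', _⟩ | ⟨_, hspec⟩
    · exact absurd heq' ha.2
    · exact hspec w ⟨hwa, hwI⟩
  have h0mem : (0:ℝ) ∈ Icc 0 t := ⟨le_rfl, hs.1.trans hs.2⟩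
  have hnon_u : (Icc 0 t ∩ uS).Nonempty := by
    refine ⟨0, h0mem, mem_biUnion ⟨h0mem, ?_⟩ (hUmem 0 h0mem)⟩
    rw [h₁.2.1, h₂.2.1]
  have hnon_v : (Icc 0 t ∩ vS).Nonempty :=
    ⟨s, hs, mem_biUnion ⟨hs, hne⟩ (hUmem s hs)⟩
  obtain ⟨w, hwI, hwu, hwv⟩ :=
    isPreconnected_Icc uS vS huSopen hvSopen hcover hnon_u hnon_v
  exact hv_ne w ⟨hwv, hwI⟩ (hu_agree w ⟨hwu, hwI⟩)



def LiftTimes (f : ℂ → ℂ) (z₀ v : ℂ) : Set ℝ := {t | 0 ≤ t ∧ ∃ γ, IsLift f z₀ v t γ}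

theorem zero_mem_liftTimes {z₀ v : ℂ} (hz₀ : z₀ ∈ Metric.ball (0:ℂ) 1) :
    (0:ℝ) ∈ LiftTimes f z₀ v := by
  refine ⟨le_rfl, fun _ => z₀, continuousOn_const, rfl, ?_⟩
  intro s hs
  rw [Icc_self, mem_singleton_iff] at hs
  subst hs
  simp [hz₀]

theorem liftTimes_mem_of_le {z₀ v : ℂ} {t t' : ℝ} (ht : t ∈ LiftTimes f z₀ v)
    (h0 : 0 ≤ t') (h1 : t' ≤ t) : t' ∈ LiftTimes f z₀ v := by
  obtain ⟨ht0, γ, hγ⟩ := ht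
  exact ⟨h0, γ, hγ.restrict ⟨h0, h1⟩⟩

open Classical in
def theLift (f : ℂ → ℂ) (z₀ v : ℂ) : ℝ → ℂ :=
  fun t => if h : ∃ γ, IsLift f z₀ v t γ then h.choose t else z₀

theorem theLift_eq (hyp : Hyp f f') {z₀ v : ℂ} {t : ℝ} {γ : ℝ → ℂ}
    (ht : t ∈ LiftTimes f z₀ v) (hγ : IsLift f z₀ v t γ) :
    ∀ s ∈ Icc 0 t, theLift f z₀ v s = γ s := by
  intro s hs
  have hsmem : s ∈ LiftTimes f z₀ v := liftTimes_mem_of_le ht hs.1 hs.2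
  have hex : ∃ γ', IsLift f z₀ v s γ' := hsmem.2
  simp only [theLift]
  rw [dif_pos hex]
  exact lift_unique hyp hex.choose_spec (hγ.restrict hs) ⟨hs.1, le_rfl⟩

theorem isLift_theLift (hyp : Hyp f f') {z₀ v : ℂ} {t : ℝ} (ht : t ∈ LiftTimes f z₀ v) :
    IsLift f z₀ v t (theLift f z₀ v) := by
  obtain ⟨ht0, γ, hγ⟩ := ht
  have heq : ∀ s ∈ Icc 0 t, theLift f z₀ v s = γ s := theLift_eq hyp ⟨ht0, γ, hγ⟩ hγ
  refine ⟨hγ.1.congr heq, ?_, ?_⟩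
  · rw [heq 0 ⟨le_rfl, ht0⟩, hγ.2.1]
  · intro s hs
    rw [heq s hs]
    exact hγ.2.2 s hs

/-- glue two continuous functions -/
theorem continuousOn_if_le {a t b : ℝ} {γ β : ℝ → ℂ} (hat : a ≤ t) (htb : t ≤ b)
    (hγ : ContinuousOn γ (Icc a t)) (hβ : ContinuousOn β (Icc t b)) (hj : γ t = β t) :
    ContinuousOn (fun s => if s ≤ t then γ s else β s) (Icc a b) := by
  apply ContinuousOn.if
  · intro x hx
    have hfr : frontier {a : ℝ | a ≤ t} = {t} := frontier_Iic
    have hxt : x ∈ ({t} : Set ℝ) := hfr ▸ hx.2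
    have hxt' : x = t := hxt
    rw [hxt', hj]
  · apply hγ.mono
    intro x hx
    have : closure {a : ℝ | a ≤ t} = Iic t := closure_Iic t
    rw [this] at hx
    exact ⟨hx.1.1, hx.2⟩
  · apply hβ.mono
    intro x hx
    have h1 : {a : ℝ | ¬a ≤ t} = Ioi t := by ext y; simp [not_le]
    rw [h1, closure_Ioi] at hx
    exact ⟨hx.2, hx.1.2⟩

theorem liftTimes_extend (hyp : Hyp f f') {z₀ v : ℂ} {t : ℝ} (ht : t ∈ LiftTimes f z₀ v) :
    ∃ δ > 0, t + δ ∈ LiftTimes f z₀ v := by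
  have ht0 : 0 ≤ t := ht.1
  have hγ := isLift_theLift hyp ht
  set γ := theLift f z₀ v with hγdef
  obtain ⟨hmem, hval⟩ := hγ.2.2 t ⟨ht0, le_rfl⟩
  obtain ⟨e, hsrc, hsub, hecoe⟩ := hyp.partialHomeo hmem
  have hfe : ∀ x, e x = f x := fun x => congrFun hecoe x
  have htar : f z₀ + (t:ℂ)*v ∈ e.target := by
    rw [← hval, ← hfe]
    exact e.map_source hsrc
  obtain ⟨δ₁, hδ₁pos, hball⟩ := Metric.isOpen_iff.mp e.open_target _ htar
  set δ := δ₁ / (2 * (‖v‖ + 1)) with hδdef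
  have hδpos : 0 < δ := by positivity
  have habs : ∀ s ∈ Icc t (t + δ), f z₀ + (s:ℂ)*v ∈ e.target := by
    intro s hs
    apply hball
    rw [mem_ball, Complex.dist_eq]
    have h1 : (f z₀ + (s:ℂ)*v) - (f z₀ + (t:ℂ)*v) = ((s - t : ℝ):ℂ)*v := by push_cast; ring
    rw [h1, norm_mul]
    have h2 : ‖((s - t : ℝ):ℂ)‖ = |s - t| := by rw [Complex.norm_real, Real.norm_eq_abs]
    rw [h2, _root_.abs_of_nonneg (by linarith [hs.1] : (0:ℝ) ≤ s - t)]
    have h3 : s - t ≤ δ := by linarith [hs.2]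
    have h4 : ‖v‖ < ‖v‖ + 1 := by linarith
    calc (s - t) * ‖v‖ ≤ δ * (‖v‖ + 1) := by
          apply mul_le_mul h3 (le_of_lt h4) (norm_nonneg v) hδpos.le
      _ = δ₁ / 2 := by rw [hδdef]; field_simp
      _ < δ₁ := by linarith
  have hjunction : e.symm (f z₀ + (t:ℂ)*v) = γ t := by
    rw [← hval, ← hfe, e.left_inv hsrc]
  set β : ℝ → ℂ := fun s => e.symm (f z₀ + (s:ℂ)*v) with hβdef
  have hβcont : ContinuousOn β (Icc t (t+δ)) := by
    apply e.continuousOn_symm.comp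
    · exact (continuous_const.add (Complex.continuous_ofReal.mul continuous_const)).continuousOn
    · exact habs
  refine ⟨δ, hδpos, by linarith, fun s => if s ≤ t then γ s else β s, ?_, ?_, ?_⟩
  · exact continuousOn_if_le ht0 (by linarith) (hγ.1) hβcont hjunction.symm
  · simp only [if_pos ht0]
    exact hγ.2.1
  · intro s hs
    by_cases hst : s ≤ t
    · simp only [if_pos hst]
      exact hγ.2.2 s ⟨hs.1, hst⟩
    · simp only [if_neg hst]
      push_neg at hst
      have hsIcc : s ∈ Icc t (t+δ) := ⟨hst.le, hs.2⟩
      have h1 := habs s hsIcc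
      constructor
      · exact hsub (e.map_target h1)
      · rw [hβdef]
        simp only
        rw [← hfe, e.right_inv h1]

theorem theLift_hasDerivAt (hyp : Hyp f f') {z₀ v : ℂ} {t s : ℝ}
    (ht : t ∈ LiftTimes f z₀ v) (hs : s ∈ Ioo 0 t) :
    HasDerivAt (theLift f z₀ v) ((f' (theLift f z₀ v s))⁻¹ * v) s := by
  have hγ := isLift_theLift hyp ht
  set γ := theLift f z₀ v with hγdef
  have hsIcc : s ∈ Icc 0 t := ⟨hs.1.le, hs.2.le⟩
  obtain ⟨hmem, hval⟩ := hγ.2.2 s hsIcc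
  obtain ⟨e, hsrc, hsub, hecoe⟩ := hyp.partialHomeo hmem
  have hfe : ∀ x, e x = f x := fun x => congrFun hecoe x
  have hIccNhds : Icc (0:ℝ) t ∈ 𝓝 s := Icc_mem_nhds hs.1 hs.2
  have hcontAt : ContinuousAt γ s := hγ.1.continuousAt hIccNhds
  have hevsrc : ∀ᶠ u in 𝓝 s, γ u ∈ e.source := hcontAt.eventually_mem (e.open_source.mem_nhds hsrc)
  have htar : f z₀ + (s:ℂ)*v ∈ e.target := by
    rw [← hval, ← hfe]
    exact e.map_source hsrc
  have hsymmval : e.symm (f z₀ + (s:ℂ)*v) = γ s := by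
    rw [← hval, ← hfe, e.left_inv hsrc]
  have hsymmDeriv : HasDerivAt e.symm ((f' (γ s))⁻¹) (f z₀ + (s:ℂ)*v) := by
    have h1 : HasDerivAt f (f' (γ s)) (e.symm (f z₀ + (s:ℂ)*v)) := by
      rw [hsymmval]; exact hyp.hd _ hmem
    refine HasDerivAt.of_local_left_inverse (e.continuousAt_symm htar) h1 (hyp.hne _ hmem) ?_
    filter_upwards [e.open_target.mem_nhds htar] with y hy
    rw [← hfe, e.right_inv hy]
  have hlinC : HasDerivAt (fun w : ℂ => f z₀ + w * v) v ((s:ℝ):ℂ) := by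
    simpa using ((hasDerivAt_id ((s:ℝ):ℂ)).mul_const v).const_add (f z₀)
  have hlin : HasDerivAt (fun u : ℝ => f z₀ + (u:ℂ) * v) v s := hlinC.comp_ofReal
  have hcomp : HasDerivAt (fun u : ℝ => e.symm (f z₀ + (u:ℂ) * v)) ((f' (γ s))⁻¹ * v) s :=
    HasDerivAt.comp s hsymmDeriv hlin
  apply hcomp.congr_of_eventuallyEq
  filter_upwards [hevsrc, hIccNhds] with u husrc huIcc
  have h1 : f (γ u) = f z₀ + (u:ℂ)*v := (hγ.2.2 u huIcc).2
  rw [← h1, ← hfe, e.left_inv husrc]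



theorem lift_crossing (hyp : Hyp f f') {z₀ v : ℂ} {r : ℝ}
    (hz₀ : z₀ ∈ Metric.ball (0:ℂ) 1) (hv : v ≠ 0)
    (hr0 : ‖z₀‖ < r) (hr1 : r < 1) :
    ∃ t > 0, t ∈ LiftTimes f z₀ v ∧ ‖(theLift f z₀ v t)‖ = r := by
  by_contra hcon
  push_neg at hcon
  have allLT : ∀ t ∈ LiftTimes f z₀ v, ∀ u ∈ Icc (0:ℝ) t,
      ‖(theLift f z₀ v u)‖ < r := by
    intro t ht u hu
    by_contra hge
    push_neg at hge
    have hγ := isLift_theLift hyp ht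
    have hcont : ContinuousOn (fun w => ‖(theLift f z₀ v w)‖) (Icc 0 u) :=
      continuous_norm.comp_continuousOn (hγ.1.mono (Icc_subset_Icc le_rfl hu.2))
    have h0u : ‖(theLift f z₀ v 0)‖ = ‖z₀‖ := by rw [hγ.2.1]
    have hr_mem : r ∈ Icc (‖(theLift f z₀ v 0)‖)
        (‖(theLift f z₀ v u)‖) := by
      rw [h0u]; exact ⟨hr0.le, hge⟩
    obtain ⟨w, hw, hweq⟩ := intermediate_value_Icc hu.1 hcont hr_mem
    have hweq' : ‖(theLift f z₀ v w)‖ = r := hweq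
    have hw0 : 0 < w := by
      rcases eq_or_lt_of_le hw.1 with h | h
      · exfalso
        rw [← h] at hweq'
        rw [h0u] at hweq'
        exact absurd hweq' (ne_of_lt hr0)
      · exact h
    have hwmem : w ∈ LiftTimes f z₀ v := liftTimes_mem_of_le ht hw.1 (hw.2.trans hu.2)
    exact hcon w hw0 hwmem hweq'
  have hsubB : closedBall (0:ℂ) r ⊆ Metric.ball (0:ℂ) 1 := closedBall_subset_ball hr1
  obtain ⟨M, hM⟩ := (isCompact_closedBall (0:ℂ) r).exists_bound_of_continuousOn
    (hyp.contOn.mono hsubB)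
  have hcontM : ContinuousOn (fun z => (f' z)⁻¹ * v) (closedBall (0:ℂ) r) :=
    ((hyp.hcont.mono hsubB).inv₀ (fun z hz => hyp.hne z (hsubB hz))).mul continuousOn_const
  obtain ⟨M', hM'⟩ := (isCompact_closedBall (0:ℂ) r).exists_bound_of_continuousOn hcontM
  have hz₀cb : z₀ ∈ closedBall (0:ℂ) r := by
    rw [mem_closedBall_zero_iff]; exact le_of_lt hr0
  have hM'0 : 0 ≤ M' := le_trans (norm_nonneg _) (hM' z₀ hz₀cb)
  have hvpos : 0 < ‖v‖ := by rw [norm_pos_iff]; exact hv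
  have hval : ∀ t ∈ LiftTimes f z₀ v, f (theLift f z₀ v t) = f z₀ + (t:ℂ) * v := by
    intro t ht
    exact ((isLift_theLift hyp ht).2.2 t ⟨ht.1, le_rfl⟩).2
  have hmem : ∀ t ∈ LiftTimes f z₀ v, ∀ u ∈ Icc (0:ℝ) t,
      theLift f z₀ v u ∈ closedBall (0:ℂ) r := by
    intro t ht u hu
    rw [mem_closedBall_zero_iff]
    exact le_of_lt (allLT t ht u hu)
  by_cases hbdd : BddAbove (LiftTimes f z₀ v)
  case neg =>
    rw [not_bddAbove_iff] at hbdd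
    obtain ⟨t, ht, htlarge⟩ := hbdd ((M + ‖f z₀‖ + 1) / ‖v‖)
    have ht0 : (0:ℝ) ≤ t := ht.1
    have h1 : ‖f (theLift f z₀ v t)‖ ≤ M := hM _ (hmem t ht t ⟨ht0, le_rfl⟩)
    have h2 : f (theLift f z₀ v t) = f z₀ + (t:ℂ) * v := hval t ht
    have h3 : ‖(t:ℂ) * v‖ ≤ ‖f (theLift f z₀ v t)‖ + ‖f z₀‖ := by
      calc ‖(t:ℂ) * v‖ = ‖(f z₀ + (t:ℂ)*v) - f z₀‖ := by rw [add_sub_cancel_left]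
        _ ≤ ‖f z₀ + (t:ℂ)*v‖ + ‖f z₀‖ := norm_sub_le _ _
        _ = ‖f (theLift f z₀ v t)‖ + ‖f z₀‖ := by rw [h2]
    have h4 : ‖(t:ℂ) * v‖ = t * ‖v‖ := by
      rw [norm_mul, Complex.norm_real, Real.norm_eq_abs,
        _root_.abs_of_nonneg ht0]
    have h5 : (M + ‖f z₀‖ + 1) < t * ‖v‖ := by
      rw [div_lt_iff₀ hvpos] at htlarge
      exact htlarge
    rw [h4] at h3
    linarith
  case pos =>
    set b := sSup (LiftTimes f z₀ v) with hbdef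
    have hLTne : (LiftTimes f z₀ v).Nonempty := ⟨0, zero_mem_liftTimes hz₀⟩
    have hble : ∀ t ∈ LiftTimes f z₀ v, t ≤ b := fun t ht => le_csSup hbdd ht
    obtain ⟨δ₀, hδ₀pos, hδ₀mem⟩ := liftTimes_extend hyp (zero_mem_liftTimes hz₀ (v := v))
    have hbpos : 0 < b := lt_of_lt_of_le hδ₀pos (by simpa using hble _ hδ₀mem)
    have hIco : ∀ u : ℝ, 0 ≤ u → u < b → u ∈ LiftTimes f z₀ v := by
      intro u hu0 hub
      obtain ⟨t, ht, hut⟩ := exists_lt_of_lt_csSup hLTne hub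
      exact liftTimes_mem_of_le ht hu0 hut.le
    have hlip : ∀ t₁ t₂ : ℝ, 0 < t₁ → t₁ ≤ t₂ → t₂ < b →
        ‖theLift f z₀ v t₂ - theLift f z₀ v t₁‖ ≤ M' * (t₂ - t₁) := by
      intro t₁ t₂ h1 h2 h3
      set t₃ := (t₂ + b) / 2 with ht₃def
      have ht₃1 : t₂ < t₃ := by rw [ht₃def]; linarith
      have ht₃2 : t₃ < b := by rw [ht₃def]; linarith
      have ht₃mem : t₃ ∈ LiftTimes f z₀ v := hIco t₃ (by linarith) ht₃2
      have hder : ∀ u ∈ Icc t₁ t₂,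
          HasDerivWithinAt (theLift f z₀ v) ((f' (theLift f z₀ v u))⁻¹ * v) (Icc t₁ t₂) u := by
        intro u hu
        exact (theLift_hasDerivAt hyp ht₃mem
          ⟨lt_of_lt_of_le h1 hu.1, lt_of_le_of_lt hu.2 ht₃1⟩).hasDerivWithinAt
      have hbound : ∀ u ∈ Ico t₁ t₂, ‖(f' (theLift f z₀ v u))⁻¹ * v‖ ≤ M' := by
        intro u hu
        exact hM' _ (hmem t₃ ht₃mem u ⟨by linarith [hu.1], by linarith [hu.2]⟩)
      have := norm_image_sub_le_of_norm_deriv_le_segment' hder hbound t₂ ⟨h2, le_rfl⟩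
      linarith [this]
    have hpair : ∀ t₁ t₂ : ℝ, 0 < t₁ → t₁ < b → 0 < t₂ → t₂ < b →
        dist (theLift f z₀ v t₁) (theLift f z₀ v t₂) ≤ M' * |t₁ - t₂| := by
      intro t₁ t₂ h1 h2 h3 h4
      rcases le_total t₁ t₂ with h | h
      · rw [dist_eq_norm, norm_sub_rev, abs_sub_comm, _root_.abs_of_nonneg (by linarith)]
        exact hlip t₁ t₂ h1 h h4
      · rw [dist_eq_norm, _root_.abs_of_nonneg (by linarith)]
        exact hlip t₂ t₁ h3 h h2
    set u : ℕ → ℝ := fun n => b - (b/2) * (1/(n+1)) with hudef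
    have hu0 : ∀ n : ℕ, 0 < u n := by
      intro n
      have h1 : (1:ℝ)/(n+1) ≤ 1 := by
        rw [div_le_one (by positivity)]
        have : (0:ℝ) ≤ n := Nat.cast_nonneg n
        linarith
      have h2 : (b/2)*(1/(n+1)) ≤ (b/2) := by nlinarith
      simp only [hudef]
      linarith
    have hub : ∀ n : ℕ, u n < b := by
      intro n
      simp only [hudef]
      have : 0 < (b/2) * (1/(n+1)) := by positivity
      linarith
    have humono : ∀ {k l : ℕ}, k ≤ l → u k ≤ u l := by
      intro k l hkl
      have h1 : (1:ℝ)/(l+1) ≤ 1/(k+1) := by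
        apply one_div_le_one_div_of_le (by positivity)
        have : (k:ℝ) ≤ l := Nat.cast_le.mpr hkl
        linarith
      have h2 : (b/2) * (1/(l+1)) ≤ (b/2) * (1/(k+1)) :=
        mul_le_mul_of_nonneg_left h1 (by linarith)
      simp only [hudef]
      linarith
    have hgap : ∀ N : ℕ, b - u N = (b/2)*(1/(N+1)) := by
      intro N; simp only [hudef]; ring
    have hulim : Tendsto u atTop (𝓝 b) := by
      have h1' : Tendsto (fun N : ℕ => (1:ℝ)/(N+1)) atTop (𝓝 0) :=
        tendsto_one_div_add_atTop_nhds_zero_nat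
      have h2' := h1'.const_mul (b/2)
      simp only [mul_zero] at h2'
      have h3' := ((tendsto_const_nhds : Tendsto (fun _ : ℕ => b) atTop (𝓝 b)).sub h2')
      simpa [hudef, sub_zero] using h3'
    have hcauchy : CauchySeq (fun n => theLift f z₀ v (u n)) := by
      refine cauchySeq_of_le_tendsto_0 (fun N : ℕ => M' * ((b/2) * (1/(N+1)))) ?_ ?_
      · intro n m N hn hm
        show dist (theLift f z₀ v (u n)) (theLift f z₀ v (u m)) ≤ M' * ((b/2) * (1/(N+1)))
        calc dist (theLift f z₀ v (u n)) (theLift f z₀ v (u m)) ≤ M' * |u n - u m| :=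
              hpair _ _ (hu0 n) (hub n) (hu0 m) (hub m)
          _ ≤ M' * (b - u N) := by
              apply mul_le_mul_of_nonneg_left _ hM'0
              have h1 := humono hn
              have h2 := humono hm
              have h3 := hub n
              have h4 := hub m
              rw [abs_sub_le_iff]
              constructor <;> linarith
          _ = M' * ((b/2) * (1/(N+1))) := by rw [hgap N]
      · have h1 : Tendsto (fun N : ℕ => (1:ℝ)/(N+1)) atTop (𝓝 0) :=
          tendsto_one_div_add_atTop_nhds_zero_nat
        have h2 := h1.const_mul (M' * (b/2))
        simp only [mul_zero] at h2
        convert h2 using 2 with N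
        ring
    obtain ⟨zs, hzs⟩ := cauchySeq_tendsto_of_complete hcauchy
    have hzscb : zs ∈ closedBall (0:ℂ) r := by
      apply Metric.isClosed_closedBall.mem_of_tendsto hzs
      filter_upwards with n
      exact hmem _ (hIco _ (hu0 n).le (hub n)) _ ⟨(hu0 n).le, le_rfl⟩
    have hzsball : zs ∈ Metric.ball (0:ℂ) 1 := hsubB hzscb
    have hΓlim : ∀ t₁ : ℝ, 0 < t₁ → t₁ < b → ‖theLift f z₀ v t₁ - zs‖ ≤ M' * (b - t₁) := by
      intro t₁ h1 h2
      have htd : Tendsto (fun n => ‖theLift f z₀ v t₁ - theLift f z₀ v (u n)‖) atTop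
          (𝓝 ‖theLift f z₀ v t₁ - zs‖) :=
        (tendsto_const_nhds.sub hzs).norm
      apply le_of_tendsto htd
      have hev : ∀ᶠ n : ℕ in atTop, t₁ ≤ u n :=
        hulim.eventually (eventually_ge_nhds h2)
      filter_upwards [hev] with n hn
      calc ‖theLift f z₀ v t₁ - theLift f z₀ v (u n)‖
          = ‖theLift f z₀ v (u n) - theLift f z₀ v t₁‖ := norm_sub_rev _ _
        _ ≤ M' * (u n - t₁) := hlip t₁ (u n) h1 hn (hub n)
        _ ≤ M' * (b - t₁) := by
            apply mul_le_mul_of_nonneg_left _ hM'0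
            linarith [hub n]
    have hfzs : f zs = f z₀ + (b:ℂ) * v := by
      have hc : ContinuousAt f zs := (hyp.hd zs hzsball).differentiableAt.continuousAt
      have h1 : Tendsto (fun n => f (theLift f z₀ v (u n))) atTop (𝓝 (f zs)) :=
        hc.tendsto.comp hzs
      have h2 : Tendsto (fun n => f z₀ + ((u n : ℝ):ℂ) * v) atTop (𝓝 (f z₀ + (b:ℂ)*v)) := by
        have h4 : Tendsto (fun n => ((u n : ℝ):ℂ)) atTop (𝓝 ((b:ℝ):ℂ)) :=
          Complex.continuous_ofReal.continuousAt.tendsto.comp hulim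
        exact tendsto_const_nhds.add (h4.mul_const v)
      have h3 : ∀ n, f (theLift f z₀ v (u n)) = f z₀ + ((u n : ℝ):ℂ) * v :=
        fun n => hval _ (hIco _ (hu0 n).le (hub n))
      rw [funext h3] at h1
      exact tendsto_nhds_unique h1 h2
    obtain ⟨e, hsrc, hsubsrc, hecoe⟩ := hyp.partialHomeo hzsball
    have hfe : ∀ x, e x = f x := fun x => congrFun hecoe x
    have htar : f z₀ + (b:ℂ)*v ∈ e.target := by
      rw [← hfzs, ← hfe]; exact e.map_source hsrc
    obtain ⟨ε, hεpos, hεsub⟩ := Metric.isOpen_iff.mp e.open_source _ hsrc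
    obtain ⟨δ₁, hδ₁pos, hδ₁sub⟩ := Metric.isOpen_iff.mp e.open_target _ htar
    set ρ := δ₁ / (2 * (‖v‖ + 1)) with hρdef
    have hρpos : 0 < ρ := by positivity
    set t₁ := max (b/2) (max (b - ρ/2) (b - ε/(2*(M'+1)))) with ht₁def
    have ht₁b : t₁ < b := by
      apply max_lt (by linarith)
      apply max_lt (by linarith)
      have : 0 < ε/(2*(M'+1)) := by positivity
      linarith
    have ht₁0 : 0 < t₁ := lt_of_lt_of_le (by linarith) (le_max_left _ _)
    have ht₁ρ : b - t₁ ≤ ρ/2 := by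
      have h2 : b - ρ/2 ≤ t₁ := le_trans (le_max_left _ _) (le_max_right (b/2) _)
      linarith
    have ht₁ε : b - t₁ ≤ ε/(2*(M'+1)) := by
      have h2 : b - ε/(2*(M'+1)) ≤ t₁ := le_trans (le_max_right _ _) (le_max_right (b/2) _)
      linarith
    have hwtar : ∀ s : ℝ, |s - b| < ρ → f z₀ + (s:ℂ)*v ∈ e.target := by
      intro s hs
      apply hδ₁sub
      rw [mem_ball, Complex.dist_eq]
      have h1 : (f z₀ + (s:ℂ)*v) - (f z₀ + (b:ℂ)*v) = ((s - b : ℝ):ℂ)*v := by push_cast; ring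
      rw [h1, norm_mul, Complex.norm_real, Real.norm_eq_abs]
      calc |s - b| * ‖v‖ ≤ |s - b| * (‖v‖ + 1) := by
            apply mul_le_mul_of_nonneg_left (by linarith) (abs_nonneg _)
        _ < ρ * (‖v‖ + 1) := by
            apply mul_lt_mul_of_pos_right hs (by positivity)
        _ = δ₁ / 2 := by rw [hρdef]; field_simp
        _ < δ₁ := by linarith
    have hjct : ∀ s : ℝ, t₁ ≤ s → s < b → theLift f z₀ v s = e.symm (f z₀ + (s:ℂ)*v) := by
      intro s hs1 hs2
      have hsmem : theLift f z₀ v s ∈ e.source := by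
        apply hεsub
        rw [mem_ball, Complex.dist_eq]
        calc ‖theLift f z₀ v s - zs‖ ≤ M' * (b - s) :=
              hΓlim s (lt_of_lt_of_le ht₁0 hs1) hs2
          _ ≤ M' * (ε/(2*(M'+1))) := by
              apply mul_le_mul_of_nonneg_left _ hM'0
              linarith [ht₁ε]
          _ ≤ (M'+1) * (ε/(2*(M'+1))) := by
              apply mul_le_mul_of_nonneg_right (by linarith) (by positivity)
          _ = ε/2 := by
              have hne0 : M' + 1 ≠ 0 := by positivity
              field_simp
          _ < ε := by linarith
      have hfs : f (theLift f z₀ v s) = f z₀ + (s:ℂ)*v :=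
        hval s (hIco s (by linarith) hs2)
      rw [← hfs, ← hfe, e.left_inv hsmem]
    set t₂ := (t₁ + b)/2 with ht₂def
    have ht₂1 : t₁ < t₂ := by rw [ht₂def]; linarith
    have ht₂b : t₂ < b := by rw [ht₂def]; linarith
    set δ₂ := ρ/2 with hδ₂def
    set T := b + δ₂ with hTdef
    have hTlift : T ∈ LiftTimes f z₀ v := by
      have ht₂mem : t₂ ∈ LiftTimes f z₀ v := hIco t₂ (by linarith) ht₂b
      have hγ₂ := isLift_theLift hyp ht₂mem
      set β : ℝ → ℂ := fun s => e.symm (f z₀ + (s:ℂ)*v) with hβdef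
      have hbetween : ∀ s : ℝ, t₂ ≤ s → s ≤ T → f z₀ + (s:ℂ)*v ∈ e.target := by
        intro s h1 h2
        apply hwtar
        rw [abs_lt]
        constructor
        · have h3 : b - s ≤ b - t₂ := by linarith
          have h4 : b - t₂ < ρ := by rw [ht₂def]; linarith
          linarith
        · have h3 : s - b ≤ δ₂ := by rw [hTdef] at h2; linarith
          rw [hδ₂def] at h3
          linarith
      have hβcont : ContinuousOn β (Icc t₂ T) := by
        apply e.continuousOn_symm.comp
        · exact (continuous_const.add
            (Complex.continuous_ofReal.mul continuous_const)).continuousOn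
        · exact fun s hs => hbetween s hs.1 hs.2
      have hjct₂ : theLift f z₀ v t₂ = β t₂ := hjct t₂ (by linarith) ht₂b
      have hT0 : (0:ℝ) ≤ T := by rw [hTdef]; linarith
      refine ⟨hT0, fun s => if s ≤ t₂ then theLift f z₀ v s else β s, ?_, ?_, ?_⟩
      · exact continuousOn_if_le (by linarith) (by rw [hTdef]; linarith) hγ₂.1 hβcont hjct₂
      · simp only [if_pos (by linarith : (0:ℝ) ≤ t₂)]
        exact hγ₂.2.1
      · intro s hs
        by_cases hst : s ≤ t₂
        · simp only [if_pos hst]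
          exact hγ₂.2.2 s ⟨hs.1, hst⟩
        · simp only [if_neg hst]
          push_neg at hst
          have h1 := hbetween s hst.le hs.2
          refine ⟨hsubsrc (e.map_target h1), ?_⟩
          rw [hβdef]
          simp only
          rw [← hfe, e.right_inv h1]
    have := hble T hTlift
    rw [hTdef] at this
    linarith

theorem isLift_const {z₀ v : ℂ} (hz₀ : z₀ ∈ Metric.ball (0:ℂ) 1) :
    IsLift f z₀ v 0 (fun _ => z₀) := by
  refine ⟨continuousOn_const, rfl, ?_⟩
  intro s hs
  rw [Icc_self, mem_singleton_iff] at hs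
  subst hs
  simp [hz₀]

theorem IsLift.endval {z₀ v : ℂ} {t : ℝ} {γ : ℝ → ℂ} (h : IsLift f z₀ v t γ) (ht : 0 ≤ t) :
    f (γ t) = f z₀ + (t:ℂ) * v := (h.2.2 t ⟨ht, le_rfl⟩).2

theorem IsLift.reverse {z₀ v : ℂ} {t : ℝ} {γ : ℝ → ℂ} (h : IsLift f z₀ v t γ) (ht : 0 ≤ t) :
    IsLift f (γ t) (-v) t (fun s => γ (t - s)) := by
  have hmap : ∀ s ∈ Icc (0:ℝ) t, t - s ∈ Icc (0:ℝ) t := by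
    intro s hs
    exact ⟨by linarith [hs.2], by linarith [hs.1]⟩
  refine ⟨h.1.comp (continuous_const.sub continuous_id).continuousOn hmap, by simp, ?_⟩
  intro s hs
  have h2 := h.2.2 (t - s) (hmap s hs)
  refine ⟨h2.1, ?_⟩
  rw [h2.2, h.endval ht]
  push_cast
  ring

theorem IsLift.tail {z₀ v : ℂ} {t t' : ℝ} {γ : ℝ → ℂ} (h : IsLift f z₀ v t γ)
    (ht' : t' ∈ Icc 0 t) : IsLift f (γ t') v (t - t') (fun s => γ (t' + s)) := by
  have hmap : ∀ s ∈ Icc (0:ℝ) (t - t'), t' + s ∈ Icc (0:ℝ) t := by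
    intro s hs
    exact ⟨by linarith [hs.1, ht'.1], by linarith [hs.2]⟩
  refine ⟨h.1.comp (continuous_const.add continuous_id).continuousOn hmap, by simp, ?_⟩
  intro s hs
  have h2 := h.2.2 (t' + s) (hmap s hs)
  refine ⟨h2.1, ?_⟩
  rw [h2.2, (h.2.2 t' ht').2]
  push_cast
  ring

theorem IsLift.concat {z₀ v : ℂ} {t t' : ℝ} {γ δ : ℝ → ℂ} (h₁ : IsLift f z₀ v t γ)
    (h₂ : IsLift f (γ t) v t' δ) (ht : 0 ≤ t) (ht' : 0 ≤ t') :
    IsLift f z₀ v (t + t') (fun s => if s ≤ t then γ s else δ (s - t)) := by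
  have hβcont : ContinuousOn (fun s => δ (s - t)) (Icc t (t + t')) := by
    apply h₂.1.comp (continuous_id.sub continuous_const).continuousOn
    intro s hs
    simp only [Pi.sub_apply, id_eq]
    exact ⟨by linarith [hs.1], by linarith [hs.2]⟩
  have hj : γ t = δ (t - t) := by
    rw [sub_self, h₂.2.1]
  refine ⟨continuousOn_if_le ht (by linarith) h₁.1 hβcont hj, ?_, ?_⟩
  · simp only [if_pos ht]
    exact h₁.2.1
  · intro s hs
    by_cases hst : s ≤ t
    · simp only [if_pos hst]
      exact h₁.2.2 s ⟨hs.1, hst⟩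
    · simp only [if_neg hst]
      push_neg at hst
      have h2 := h₂.2.2 (s - t) ⟨by linarith, by linarith [hs.2]⟩
      refine ⟨h2.1, ?_⟩
      rw [h2.2, h₁.endval ht]
      push_cast
      ring

def Traj (f : ℂ → ℂ) (z₀ : ℂ) : Set ℂ :=
  {z | ∃ v : ℂ, (v = 1 ∨ v = -1) ∧ ∃ t : ℝ, 0 ≤ t ∧ ∃ γ, IsLift f z₀ v t γ ∧ γ t = z}

theorem mem_traj_of_lift {z₀ v : ℂ} {t : ℝ} {γ : ℝ → ℂ} (hv : v = 1 ∨ v = -1)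
    (ht : 0 ≤ t) (hγ : IsLift f z₀ v t γ) : γ t ∈ Traj f z₀ :=
  ⟨v, hv, t, ht, γ, hγ, rfl⟩

theorem mem_traj_self {z₀ : ℂ} (hz₀ : z₀ ∈ Metric.ball (0:ℂ) 1) : z₀ ∈ Traj f z₀ :=
  ⟨1, Or.inl rfl, 0, le_rfl, fun _ => z₀, isLift_const hz₀, rfl⟩

theorem neg_mem_pm {v : ℂ} (hv : v = 1 ∨ v = -1) : -v = 1 ∨ -v = -1 := by
  rcases hv with h | h <;> subst h <;> simp

theorem traj_symm {z₀ z : ℂ} (hz : z ∈ Traj f z₀) : z₀ ∈ Traj f z := by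
  obtain ⟨v, hv, t, ht, γ, hγ, hγt⟩ := hz
  have := hγ.reverse ht
  rw [hγt] at this
  refine ⟨-v, neg_mem_pm hv, t, ht, _, this, ?_⟩
  simp [hγ.2.1]

theorem traj_trans (hyp : Hyp f f') {z₀ z₁ z₂ : ℂ} (h₁ : z₁ ∈ Traj f z₀)
    (h₂ : z₂ ∈ Traj f z₁) : z₂ ∈ Traj f z₀ := by
  obtain ⟨v, hv, t, ht, γ, hγ, hγt⟩ := h₁
  obtain ⟨v', hv', t', ht', δ, hδ, hδt⟩ := h₂
  subst hγt
  by_cases hvv : v' = v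
  · -- same direction: concatenate
    subst hvv
    have hcat := hγ.concat hδ ht ht'
    refine ⟨v', hv, t + t', by linarith, _, hcat, ?_⟩
    by_cases hc : t + t' ≤ t
    · have ht'0 : t' = 0 := by linarith
      simp only [if_pos hc]
      subst ht'0
      rw [← hδt, hδ.2.1]
      norm_num
    · simp only [if_neg hc]
      rw [add_sub_cancel_left]
      exact hδt
  · -- opposite direction
    have hvneg : v' = -v := by
      rcases hv with h | h <;> rcases hv' with h' | h' <;> subst h <;> subst h' <;>
        first
        | exact absurd rfl hvv
        | norm_num
    subst hvneg
    have hrev := hγ.reverse ht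
    rcases le_total t' t with hc | hc
    · -- z₂ = γ (t - t')
      have hres := hrev.restrict ⟨ht', hc⟩
      have heq : δ t' = γ (t - t') := lift_unique hyp hδ hres ⟨ht', le_rfl⟩
      refine ⟨v, hv, t - t', by linarith, γ, hγ.restrict ⟨by linarith, by linarith⟩, ?_⟩
      rw [← heq, hδt]
    · -- δ passes through z₀ at time t and continues
      have hres := hδ.restrict ⟨ht, hc⟩
      have heq : γ (t - t) = δ t := lift_unique hyp hrev hres ⟨ht, le_rfl⟩
      rw [sub_self, hγ.2.1] at heq
      have htail := hδ.tail ⟨ht, hc⟩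
      rw [← heq] at htail
      refine ⟨-v, neg_mem_pm hv, t' - t, by linarith, _, htail, ?_⟩
      show δ (t + (t' - t)) = z₂
      have harith : t + (t' - t) = t' := by ring
      rw [harith]
      exact hδt

theorem traj_mono (hyp : Hyp f f') {z₀ z₁ : ℂ} (h : z₁ ∈ Traj f z₀) :
    Traj f z₁ ⊆ Traj f z₀ := fun _ hz => traj_trans hyp h hz

/-- On each circle `|z| = s`, a level set of `Im Φ` has at most 2 points,
where `Φ' = exp(α ℓ)` and `Re (1 + α z ℓ') > 0`. -/
theorem circle_count {ℓ Φ : ℂ → ℂ} {α : ℝ}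
    (hℓd : DifferentiableOn ℂ ℓ (Metric.ball 0 1))
    (hΦ : ∀ z ∈ Metric.ball (0:ℂ) 1, HasDerivAt Φ (Complex.exp ((α:ℂ) * ℓ z)) z)
    (hpos : ∀ z ∈ Metric.ball (0:ℂ) 1, 0 < (1 + (α:ℂ) * (z * deriv ℓ z)).re)
    {s : ℝ} (hs0 : 0 < s) (hs1 : s < 1) (c : ℝ) :
    ∀ z₁ z₂ z₃ : ℂ, (‖z₁‖ = s ∧ (Φ z₁).im = c) →
      (‖z₂‖ = s ∧ (Φ z₂).im = c) → (‖z₃‖ = s ∧ (Φ z₃).im = c) →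
      z₁ = z₂ ∨ z₁ = z₃ ∨ z₂ = z₃ := by
  have hπ : (0:ℝ) < π := Real.pi_pos
  have h2π : (0:ℝ) < 2*π := by linarith
  have hcmem : ∀ θ : ℝ, circleMap 0 s θ ∈ Metric.ball (0:ℂ) 1 := by
    intro θ
    rw [mem_ball_zero_iff, norm_circleMap_zero, _root_.abs_of_pos hs0]
    exact hs1
  -- derivative of ℓ along the circle
  have hℓcirc : ∀ θ : ℝ, HasDerivAt (fun θ => ℓ (circleMap 0 s θ))
      (deriv ℓ (circleMap 0 s θ) * (circleMap 0 s θ * I)) θ := by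
    intro θ
    have h1 : HasDerivAt ℓ (deriv ℓ (circleMap 0 s θ)) (circleMap 0 s θ) :=
      (hℓd.differentiableAt (Metric.isOpen_ball.mem_nhds (hcmem θ))).hasDerivAt
    exact h1.comp θ (hasDerivAt_circleMap 0 s θ)
  set χ : ℝ → ℝ := fun θ => θ + α * (ℓ (circleMap 0 s θ)).im with hχdef
  have hχderiv : ∀ θ : ℝ, HasDerivAt χ
      (1 + α * (circleMap 0 s θ * deriv ℓ (circleMap 0 s θ)).re) θ := by
    intro θ
    set z := circleMap 0 s θ with hzdef
    have h1 : HasDerivAt (fun θ => (ℓ (circleMap 0 s θ)).im)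
        ((deriv ℓ z * (z * I)).im) θ :=
      (Complex.imCLM.hasFDerivAt.comp_hasDerivAt θ (hℓcirc θ))
    have h2 : (deriv ℓ z * (z * I)).im = (z * deriv ℓ z).re := by
      have h3 : deriv ℓ z * (z * I) = (z * deriv ℓ z) * I := by ring
      rw [h3, Complex.mul_I_im]
    rw [h2] at h1
    exact (hasDerivAt_id θ).add (h1.const_mul α)
  have hχpos : ∀ θ : ℝ, 0 < 1 + α * (circleMap 0 s θ * deriv ℓ (circleMap 0 s θ)).re := by
    intro θ
    have := hpos _ (hcmem θ)
    rwa [Complex.add_re, Complex.one_re, Complex.re_ofReal_mul] at this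
  have hχmono : StrictMono χ := by
    apply strictMono_of_deriv_pos
    intro θ
    rw [(hχderiv θ).deriv]
    exact hχpos θ
  have hχcont : Continuous χ :=
    continuous_iff_continuousAt.mpr fun θ => (hχderiv θ).continuousAt
  have hper : ∀ θ : ℝ, χ (θ + 2*π) = χ θ + 2*π := by
    intro θ
    have h1 : circleMap 0 s (θ + 2*π) = circleMap 0 s θ := periodic_circleMap 0 s θ
    simp only [hχdef, h1]
    ring
  have hper2 : ∀ (n : ℕ) (θ : ℝ), χ (θ + 2*π*n) = χ θ + 2*π*n := by
    intro n
    induction n with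
    | zero => simp
    | succ k ih =>
      intro θ
      have h1 : θ + 2*π*(k+1:ℕ) = (θ + 2*π*k) + 2*π := by push_cast; ring
      rw [h1, hper, ih]
      push_cast
      ring
  have hsurj : ∀ y : ℝ, ∃ θ, χ θ = y := by
    intro y
    obtain ⟨n, hn⟩ := exists_nat_gt ((|y - χ 0| + 1) / (2*π))
    have hn1 : |y - χ 0| + 1 < 2*π*n := by
      rw [div_lt_iff₀ h2π] at hn
      linarith [hn]
    have habs := abs_le.mp (le_of_lt (lt_of_lt_of_le (lt_add_one _) hn1.le) : |y - χ 0| ≤ 2*π*n)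
    have hup : y ≤ χ (0 + 2*π*n) := by
      rw [hper2 n 0]
      linarith [habs.2]
    have hdown : χ (-(2*π*n)) ≤ y := by
      have h1 : χ (-(2*π*n) + 2*π*n) = χ (-(2*π*n)) + 2*π*n := hper2 n _
      simp only [neg_add_cancel] at h1
      have h2 : χ (-(2*π*n)) = χ 0 - 2*π*n := by linarith [h1]
      rw [h2]
      linarith [habs.1]
    have hle : -(2*π*n) ≤ 0 + 2*π*n := by
      have : (0:ℝ) ≤ 2*π*n := by positivity
      linarith
    obtain ⟨θ, _, hθ⟩ := intermediate_value_Icc hle hχcont.continuousOn ⟨hdown, hup⟩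
    exact ⟨θ, hθ⟩
  obtain ⟨θ₀, hθ₀⟩ := hsurj (-(π/2))
  obtain ⟨θ₁, hθ₁⟩ := hsurj (π/2)
  have hθ01 : θ₀ < θ₁ := by
    apply hχmono.lt_iff_lt.mp
    rw [hθ₀, hθ₁]
    linarith
  have hθ12 : θ₁ < θ₀ + 2*π := by
    apply hχmono.lt_iff_lt.mp
    rw [hθ₁, hper, hθ₀]
    linarith
  -- g and its derivative
  set g : ℝ → ℝ := fun θ => (Φ (circleMap 0 s θ)).im with hgdef
  have hgderiv : ∀ θ : ℝ, HasDerivAt g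
      ((s * Real.exp (α * (ℓ (circleMap 0 s θ)).re)) * Real.cos (χ θ)) θ := by
    intro θ
    set z := circleMap 0 s θ with hzdef
    have h1 : HasDerivAt (fun θ => Φ (circleMap 0 s θ))
        (Complex.exp ((α:ℂ) * ℓ z) * (z * I)) θ :=
      (hΦ z (hcmem θ)).comp θ (hasDerivAt_circleMap 0 s θ)
    have h2 : HasDerivAt g ((Complex.exp ((α:ℂ) * ℓ z) * (z * I)).im) θ :=
      (Complex.imCLM.hasFDerivAt.comp_hasDerivAt θ h1)
    have h3 : (Complex.exp ((α:ℂ) * ℓ z) * (z * I)).im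
        = (z * Complex.exp ((α:ℂ) * ℓ z)).re := by
      have h4 : Complex.exp ((α:ℂ) * ℓ z) * (z * I) = (z * Complex.exp ((α:ℂ) * ℓ z)) * I := by
        ring
      rw [h4, Complex.mul_I_im]
    -- polar computation
    have h5 : z * Complex.exp ((α:ℂ) * ℓ z)
        = ((s * Real.exp (α * (ℓ z).re) : ℝ) : ℂ) * Complex.exp ((χ θ : ℝ) * I) := by
      have hz : z = (s:ℂ) * Complex.exp ((θ:ℝ) * I) := by
        simp [hzdef, circleMap]
      have hαℓ : (α:ℂ) * ℓ z = ((α * (ℓ z).re : ℝ):ℂ) + ((α * (ℓ z).im : ℝ):ℂ) * I := by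
        rw [Complex.ext_iff]
        constructor <;> simp [Complex.mul_re, Complex.mul_im]
      have hexp : Complex.exp ((α:ℂ) * ℓ z)
          = ((Real.exp (α * (ℓ z).re) : ℝ):ℂ) * Complex.exp (((α * (ℓ z).im : ℝ):ℂ) * I) := by
        rw [hαℓ, Complex.exp_add, Complex.ofReal_exp]
      have hχθ : χ θ = θ + α * (ℓ z).im := rfl
      symm
      calc ((s * Real.exp (α * (ℓ z).re) : ℝ) : ℂ) * Complex.exp ((χ θ : ℝ) * I)
          = ((s:ℝ):ℂ) * ((Real.exp (α * (ℓ z).re) : ℝ):ℂ)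
              * Complex.exp ((((θ:ℝ):ℂ) + ((α * (ℓ z).im : ℝ):ℂ)) * I) := by
            rw [hχθ]; push_cast; ring_nf
      _ = ((s:ℝ):ℂ) * Complex.exp ((θ:ℝ) * I)
            * (((Real.exp (α * (ℓ z).re) : ℝ):ℂ) * Complex.exp (((α * (ℓ z).im : ℝ):ℂ) * I)) := by
            rw [add_mul, Complex.exp_add]; ring
      _ = z * (((Real.exp (α * (ℓ z).re) : ℝ):ℂ) * Complex.exp (((α * (ℓ z).im : ℝ):ℂ) * I)) := by
            rw [← hz]
      _ = z * Complex.exp ((α:ℂ) * ℓ z) := by rw [← hexp]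
    have h6 : (z * Complex.exp ((α:ℂ) * ℓ z)).re
        = (s * Real.exp (α * (ℓ z).re)) * Real.cos (χ θ) := by
      rw [h5, Complex.re_ofReal_mul, Complex.exp_ofReal_mul_I_re]
    rw [h3, h6] at h2
    exact h2
  have hgcont : Continuous g := continuous_iff_continuousAt.mpr fun θ => (hgderiv θ).continuousAt
  have hρpos : ∀ θ : ℝ, 0 < s * Real.exp (α * (ℓ (circleMap 0 s θ)).re) := by
    intro θ
    positivity
  -- monotone on the two arcs
  have hmono : StrictMonoOn g (Icc θ₀ θ₁) := by
    apply strictMonoOn_of_deriv_pos (convex_Icc _ _) hgcont.continuousOn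
    intro θ hθ
    rw [interior_Icc] at hθ
    rw [(hgderiv θ).deriv]
    apply mul_pos (hρpos θ)
    apply Real.cos_pos_of_mem_Ioo
    constructor
    · rw [← hθ₀]; exact hχmono hθ.1
    · rw [← hθ₁]; exact hχmono hθ.2
  have hanti : StrictAntiOn g (Icc θ₁ (θ₀ + 2*π)) := by
    apply strictAntiOn_of_deriv_neg (convex_Icc _ _) hgcont.continuousOn
    intro θ hθ
    rw [interior_Icc] at hθ
    rw [(hgderiv θ).deriv]
    apply mul_neg_of_pos_of_neg (hρpos θ)
    apply Real.cos_neg_of_pi_div_two_lt_of_lt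
    · rw [← hθ₁]; exact hχmono hθ.1
    · have h1 : χ θ < χ (θ₀ + 2*π) := hχmono hθ.2
      rw [hper, hθ₀] at h1
      linarith
  -- angle representatives
  have hrep : ∀ z : ℂ, ‖z‖ = s → ∃ θ ∈ Ico θ₀ (θ₀ + 2*π), circleMap 0 s θ = z := by
    intro z hz
    have h1 : z ∈ Metric.sphere (0:ℂ) |s| := by
      rw [mem_sphere_zero_iff_norm, hz, _root_.abs_of_pos hs0]
    rw [← range_circleMap] at h1
    obtain ⟨x, hx⟩ := h1
    refine ⟨toIcoMod h2π θ₀ x, toIcoMod_mem_Ico h2π θ₀ x, ?_⟩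
    rw [← hx]
    have h2 : toIcoMod h2π θ₀ x = x - toIcoDiv h2π θ₀ x • (2*π) :=
      (self_sub_toIcoDiv_zsmul h2π θ₀ x).symm
    rw [h2]
    exact (periodic_circleMap 0 s).sub_zsmul_eq _
  -- key pairwise injectivity
  have key : ∀ θa θb : ℝ, θa ∈ Ico θ₀ (θ₀ + 2*π) → θb ∈ Ico θ₀ (θ₀ + 2*π) →
      g θa = c → g θb = c →
      ((θa ≤ θ₁ ∧ θb ≤ θ₁) ∨ (θ₁ ≤ θa ∧ θ₁ ≤ θb)) → θa = θb := by
    intro θa θb ha hb hga hgb hcase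
    rcases hcase with ⟨h1, h2⟩ | ⟨h1, h2⟩
    · exact hmono.injOn ⟨ha.1, h1⟩ ⟨hb.1, h2⟩ (by rw [hga, hgb])
    · exact hanti.injOn ⟨h1, ha.2.le⟩ ⟨h2, hb.2.le⟩ (by rw [hga, hgb])
  -- main argument
  intro z₁ z₂ z₃ h₁ h₂ h₃
  obtain ⟨θa, hθa, hza⟩ := hrep z₁ h₁.1
  obtain ⟨θb, hθb, hzb⟩ := hrep z₂ h₂.1
  obtain ⟨θc, hθc, hzc⟩ := hrep z₃ h₃.1
  have hga : g θa = c := by rw [hgdef]; simp only; rw [hza]; exact h₁.2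
  have hgb : g θb = c := by rw [hgdef]; simp only; rw [hzb]; exact h₂.2
  have hgc : g θc = c := by rw [hgdef]; simp only; rw [hzc]; exact h₃.2
  by_cases c1 : θa ≤ θ₁ <;> by_cases c2 : θb ≤ θ₁ <;> by_cases c3 : θc ≤ θ₁
  · exact Or.inl (by rw [← hza, ← hzb, key θa θb hθa hθb hga hgb (Or.inl ⟨c1, c2⟩)])
  · exact Or.inl (by rw [← hza, ← hzb, key θa θb hθa hθb hga hgb (Or.inl ⟨c1, c2⟩)])
  · exact Or.inr (Or.inl (by rw [← hza, ← hzc, key θa θc hθa hθc hga hgc (Or.inl ⟨c1, c3⟩)]))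
  · exact Or.inr (Or.inr (by rw [← hzb, ← hzc,
      key θb θc hθb hθc hgb hgc (Or.inr ⟨le_of_not_ge c2, le_of_not_ge c3⟩)]))
  · exact Or.inr (Or.inr (by rw [← hzb, ← hzc,
      key θb θc hθb hθc hgb hgc (Or.inl ⟨c2, c3⟩)]))
  · exact Or.inr (Or.inl (by rw [← hza, ← hzc,
      key θa θc hθa hθc hga hgc (Or.inr ⟨le_of_not_ge c1, le_of_not_ge c3⟩)]))
  · exact Or.inl (by rw [← hza, ← hzb,
      key θa θb hθa hθb hga hgb (Or.inr ⟨le_of_not_ge c1, le_of_not_ge c2⟩)])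
  · exact Or.inl (by rw [← hza, ← hzb,
      key θa θb hθa hθb hga hgb (Or.inr ⟨le_of_not_ge c1, le_of_not_ge c2⟩)])

end Stmt14Aux

open Stmt14Aux

/-- If `f = h + conj g` is the horizontal shear of a normalized starlike
univalent `φ`, then for every `α ∈ (0,1]` the harmonic map `F_α = H + conj G` is injective
on `𝔻` and its image is convex in the horizontal direction (its intersection with every
horizontal line is connected). -/
theorem stmt14
    (h g ω φ ℓ φα H G : ℂ → ℂ) (α : ℝ)
    (hhd : DifferentiableOn ℂ h (Metric.ball 0 1))
    (hgd : DifferentiableOn ℂ g (Metric.ball 0 1))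
    (hωd : DifferentiableOn ℂ ω (Metric.ball 0 1))
    (hh0 : h 0 = 0) (hg0 : g 0 = 0) (hhp0 : deriv h 0 = 1) (hgp0 : deriv g 0 = 0)
    (hsp : ∀ z ∈ Metric.ball (0:ℂ) 1, ‖(deriv g z)‖ < ‖(deriv h z)‖)
    (hdil : ∀ z ∈ Metric.ball (0:ℂ) 1, deriv g z = ω z * deriv h z)
    (hshear : ∀ z ∈ Metric.ball (0:ℂ) 1, h z - g z = φ z)
    (hφd : DifferentiableOn ℂ φ (Metric.ball 0 1))
    (hφinj : Set.InjOn φ (Metric.ball 0 1))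
    (hφ0 : φ 0 = 0) (hφp0 : deriv φ 0 = 1)
    -- φ is starlike
    (hφne : ∀ z ∈ Metric.ball (0:ℂ) 1, z ≠ 0 → φ z ≠ 0)
    (hstar : ∀ z ∈ Metric.ball (0:ℂ) 1, z ≠ 0 → 0 < (z * deriv φ z / φ z).re)
    (hℓd : DifferentiableOn ℂ ℓ (Metric.ball 0 1)) (hℓ0 : ℓ 0 = 0)
    (hℓ : ∀ z ∈ Metric.ball (0:ℂ) 1, φ z = z * Complex.exp (ℓ z))
    (hφα0 : φα 0 = 0)
    (hφα : ∀ z ∈ Metric.ball (0:ℂ) 1, HasDerivAt φα (Complex.exp ((α : ℂ) * ℓ z)) z)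
    (hHd : DifferentiableOn ℂ H (Metric.ball 0 1))
    (hGd : DifferentiableOn ℂ G (Metric.ball 0 1))
    (hH0 : H 0 = 0) (hG0 : G 0 = 0)
    (hHG : ∀ z ∈ Metric.ball (0:ℂ) 1, H z - G z = φα z)
    (hGdil : ∀ z ∈ Metric.ball (0:ℂ) 1, deriv G z = (α : ℂ) * ω z * deriv H z)
    (hα0 : 0 < α) (hα1 : α ≤ 1) :
    Set.InjOn (fun z => H z + (starRingEnd ℂ) (G z)) (Metric.ball 0 1) ∧
    ∀ c : ℝ, IsPreconnected
      (((fun z => H z + (starRingEnd ℂ) (G z)) '' Metric.ball 0 1) ∩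
        {w : ℂ | w.im = c}) := by
  set E : ℂ → ℂ := fun z => Complex.exp ((α:ℂ) * ℓ z) with hEdef
  -- the lift hypotheses for φα
  have hyp : Hyp φα E := by
    refine ⟨hφα, fun z _ => Complex.exp_ne_zero _, ?_⟩
    exact Complex.continuous_exp.comp_continuousOn (continuousOn_const.mul hℓd.continuousOn)
  -- bound on the dilatation
  have hω1 : ∀ z ∈ Metric.ball (0:ℂ) 1, ‖((α:ℂ) * ω z)‖ < 1 := by
    intro z hz
    have h1 : ‖(ω z * deriv h z)‖ < ‖(deriv h z)‖ := by
      rw [← hdil z hz]; exact hsp z hz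
    rw [norm_mul] at h1
    have h2 : 0 < ‖(deriv h z)‖ :=
      lt_of_le_of_lt (norm_nonneg _) (hsp z hz)
    have h3 : ‖(ω z)‖ < 1 := by
      by_contra hge
      push_neg at hge
      nlinarith [h1, h2]
    rw [norm_mul, Complex.norm_real, Real.norm_eq_abs, _root_.abs_of_pos hα0]
    nlinarith [norm_nonneg (ω z)]
  have hone : ∀ z ∈ Metric.ball (0:ℂ) 1, (1:ℂ) - (α:ℂ) * ω z ≠ 0 := by
    intro z hz heq
    have h1 : (α:ℂ) * ω z = 1 := by
      have := sub_eq_zero.mp heq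
      linear_combination -this
    have h2 := hω1 z hz
    rw [h1] at h2
    simp at h2
  -- derivative identities
  have hEd : ∀ z ∈ Metric.ball (0:ℂ) 1, deriv H z - deriv G z = E z := by
    intro z hz
    have h1 : HasDerivAt (fun w => H w - G w) (deriv H z - deriv G z) z :=
      ((hHd.differentiableAt (Metric.isOpen_ball.mem_nhds hz)).hasDerivAt).sub
        ((hGd.differentiableAt (Metric.isOpen_ball.mem_nhds hz)).hasDerivAt)
    have h2 : (fun w => H w - G w) =ᶠ[𝓝 z] φα :=
      eventually_of_mem (Metric.isOpen_ball.mem_nhds hz) hHG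
    have h3 : HasDerivAt φα (deriv H z - deriv G z) z := h1.congr_of_eventuallyEq h2.symm
    exact h3.unique (hφα z hz)
  have hdH : ∀ z ∈ Metric.ball (0:ℂ) 1,
      deriv H z * ((1:ℂ) - (α:ℂ) * ω z) = E z := by
    intro z hz
    have h1 := hEd z hz
    rw [hGdil z hz] at h1
    linear_combination h1
  -- positivity of Re((1+u)/(1-u))
  have hq : ∀ u : ℂ, ‖u‖ < 1 → 0 < (((1:ℂ) + u) / (1 - u)).re := by
    intro u hu
    have hne : (1:ℂ) - u ≠ 0 := by
      intro heq
      have h1 : u = 1 := by linear_combination -(sub_eq_zero.mp heq)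
      rw [h1] at hu
      simp at hu
    rw [Complex.div_re]
    have h2 : ((1:ℂ)+u).re * ((1:ℂ)-u).re / Complex.normSq (1-u)
        + ((1:ℂ)+u).im * ((1:ℂ)-u).im / Complex.normSq (1-u)
        = (1 - Complex.normSq u) / Complex.normSq (1-u) := by
      rw [← add_div]
      congr 1
      simp only [Complex.add_re, Complex.add_im, Complex.sub_re, Complex.sub_im,
        Complex.one_re, Complex.one_im, Complex.normSq_apply]
      ring
    rw [h2]
    apply div_pos
    · have h3 : Complex.normSq u < 1 := by
        rw [← Complex.sq_norm]
        nlinarith [norm_nonneg u]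
      linarith
    · exact Complex.normSq_pos.mpr hne
  -- starlikeness in terms of ℓ
  have hpos : ∀ z ∈ Metric.ball (0:ℂ) 1, 0 < (1 + (α:ℂ) * (z * deriv ℓ z)).re := by
    intro z hz
    by_cases hz0 : z = 0
    · subst hz0; simp
    · have hder : deriv φ z = Complex.exp (ℓ z) * (1 + z * deriv ℓ z) := by
        have hev : φ =ᶠ[𝓝 z] fun w => w * Complex.exp (ℓ w) :=
          eventually_of_mem (Metric.isOpen_ball.mem_nhds hz) hℓ
        rw [hev.deriv_eq]
        have hℓz : HasDerivAt ℓ (deriv ℓ z) z :=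
          (hℓd.differentiableAt (Metric.isOpen_ball.mem_nhds hz)).hasDerivAt
        have h2 : HasDerivAt (fun w => w * Complex.exp (ℓ w))
            (1 * Complex.exp (ℓ z) + z * (Complex.exp (ℓ z) * deriv ℓ z)) z :=
          (hasDerivAt_id z).mul hℓz.cexp
        rw [h2.deriv]
        ring
      have hzφ : z * deriv φ z / φ z = 1 + z * deriv ℓ z := by
        rw [hder, hℓ z hz]
        rw [div_eq_iff (by exact mul_ne_zero hz0 (Complex.exp_ne_zero _))]
        ring
      have h1 := hstar z hz hz0
      rw [hzφ] at h1
      have h2 : (1 + z * deriv ℓ z).re = 1 + (z * deriv ℓ z).re := by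
        simp [Complex.add_re]
      have h3 : (1 + (α:ℂ) * (z * deriv ℓ z)).re = 1 + α * (z * deriv ℓ z).re := by
        simp [Complex.add_re, Complex.re_ofReal_mul]
      rw [h2] at h1
      rw [h3]
      nlinarith [h1, hα0, hα1]
  -- Im F = Im φα
  have hIm : ∀ z ∈ Metric.ball (0:ℂ) 1,
      (H z + (starRingEnd ℂ) (G z)).im = (φα z).im := by
    intro z hz
    rw [← hHG z hz]
    simp only [Complex.add_im, Complex.sub_im, Complex.conj_im]
    ring
  have hball : ∀ z : ℂ, z ∈ Metric.ball (0:ℂ) 1 → ‖z‖ < 1 := by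
    intro z hz
    rwa [mem_ball_zero_iff] at hz
  -- (★): points with equal Im φα lie on a common trajectory
  have hsame : ∀ z₁ ∈ Metric.ball (0:ℂ) 1, ∀ z₂ ∈ Metric.ball (0:ℂ) 1,
      (φα z₁).im = (φα z₂).im → z₂ ∈ Traj φα z₁ := by
    intro z₁ hz₁ z₂ hz₂ him
    by_contra hno
    have hdisj : ∀ p : ℂ, p ∈ Traj φα z₁ → p ∈ Traj φα z₂ → False := by
      intro p hp1 hp2
      exact hno (traj_trans hyp hp1 (traj_symm hp2))
    set r : ℝ := (max (‖z₁‖) (‖z₂‖) + 1) / 2 with hrdef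
    have hmax1 : max (‖z₁‖) (‖z₂‖) < 1 :=
      max_lt (hball z₁ hz₁) (hball z₂ hz₂)
    have hr₁ : ‖z₁‖ < r := by
      have h3 : ‖z₁‖ ≤ max (‖z₁‖) (‖z₂‖) := le_max_left _ _
      rw [hrdef]; linarith
    have hr₂ : ‖z₂‖ < r := by
      have h3 : ‖z₂‖ ≤ max (‖z₁‖) (‖z₂‖) := le_max_right _ _
      rw [hrdef]; linarith
    have hr1 : r < 1 := by rw [hrdef]; linarith
    have hr0 : 0 < r := by
      have := norm_nonneg z₁
      have h3 : ‖z₁‖ ≤ max (‖z₁‖) (‖z₂‖) := le_max_left _ _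
      rw [hrdef]; linarith
    obtain ⟨t₁, ht₁pos, ht₁mem, ht₁abs⟩ :=
      lift_crossing hyp (v := 1) hz₁ one_ne_zero hr₁ hr1
    obtain ⟨t₂, ht₂pos, ht₂mem, ht₂abs⟩ :=
      lift_crossing hyp (v := -1) hz₁ (by norm_num) hr₁ hr1
    obtain ⟨t₃, ht₃pos, ht₃mem, ht₃abs⟩ :=
      lift_crossing hyp (v := 1) hz₂ one_ne_zero hr₂ hr1
    have hL₁ := isLift_theLift hyp ht₁mem
    have hL₂ := isLift_theLift hyp ht₂mem
    have hL₃ := isLift_theLift hyp ht₃mem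
    have hv₁ : φα (theLift φα z₁ 1 t₁) = φα z₁ + (t₁:ℂ) * 1 :=
      (hL₁.2.2 t₁ ⟨ht₁mem.1, le_rfl⟩).2
    have hv₂ : φα (theLift φα z₁ (-1) t₂) = φα z₁ + (t₂:ℂ) * (-1) :=
      (hL₂.2.2 t₂ ⟨ht₂mem.1, le_rfl⟩).2
    have hv₃ : φα (theLift φα z₂ 1 t₃) = φα z₂ + (t₃:ℂ) * 1 :=
      (hL₃.2.2 t₃ ⟨ht₃mem.1, le_rfl⟩).2
    have him₁ : (φα (theLift φα z₁ 1 t₁)).im = (φα z₁).im := by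
      rw [hv₁]; simp
    have him₂ : (φα (theLift φα z₁ (-1) t₂)).im = (φα z₁).im := by
      rw [hv₂]; simp
    have him₃ : (φα (theLift φα z₂ 1 t₃)).im = (φα z₁).im := by
      rw [hv₃, him]; simp
    have hp₁T : theLift φα z₁ 1 t₁ ∈ Traj φα z₁ :=
      mem_traj_of_lift (Or.inl rfl) ht₁mem.1 hL₁
    have hp₂T : theLift φα z₁ (-1) t₂ ∈ Traj φα z₁ :=
      mem_traj_of_lift (Or.inr rfl) ht₂mem.1 hL₂
    have hp₃T : theLift φα z₂ 1 t₃ ∈ Traj φα z₂ :=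
      mem_traj_of_lift (Or.inl rfl) ht₃mem.1 hL₃
    have h12 : theLift φα z₁ 1 t₁ ≠ theLift φα z₁ (-1) t₂ := by
      intro heq
      have h1 : φα z₁ + (t₁:ℂ) * 1 = φα z₁ + (t₂:ℂ) * (-1) := by
        rw [← hv₁, ← hv₂, heq]
      have h2 : (t₁:ℂ) = -(t₂:ℂ) := by linear_combination h1
      have h3 : t₁ = -t₂ := by
        have := congrArg Complex.re h2
        simpa using this
      linarith
    have h13 : theLift φα z₁ 1 t₁ ≠ theLift φα z₂ 1 t₃ := by
      intro heq
      exact hdisj _ hp₁T (heq ▸ hp₃T)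
    have h23 : theLift φα z₁ (-1) t₂ ≠ theLift φα z₂ 1 t₃ := by
      intro heq
      exact hdisj _ hp₂T (heq ▸ hp₃T)
    have hcc := circle_count hℓd hφα hpos hr0 hr1 ((φα z₁).im)
      (theLift φα z₁ 1 t₁) (theLift φα z₁ (-1) t₂) (theLift φα z₂ 1 t₃)
      ⟨ht₁abs, him₁⟩ ⟨ht₂abs, him₂⟩ ⟨ht₃abs, him₃⟩
    rcases hcc with hcc | hcc | hcc
    · exact h12 hcc
    · exact h13 hcc
    · exact h23 hcc
  -- algebraic derivative identities along the flow
  have hAB : ∀ w ∈ Metric.ball (0:ℂ) 1,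
      deriv H w * (E w)⁻¹ = ((1:ℂ) - (α:ℂ)*ω w)⁻¹ ∧
      deriv G w * (E w)⁻¹ = (α:ℂ)*ω w * ((1:ℂ) - (α:ℂ)*ω w)⁻¹ := by
    intro w hw
    have h1 := hdH w hw
    have hEne : E w ≠ 0 := Complex.exp_ne_zero _
    have hone' := hone w hw
    have hfst : deriv H w * (E w)⁻¹ = ((1:ℂ) - (α:ℂ)*ω w)⁻¹ := by
      field_simp
      linear_combination h1
    refine ⟨hfst, ?_⟩
    rw [hGdil w hw, mul_assoc, hfst]
  have hRe : ∀ w ∈ Metric.ball (0:ℂ) 1,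
      (deriv H w * (E w)⁻¹ + (starRingEnd ℂ) (deriv G w * (E w)⁻¹)).re
        = (((1:ℂ) + (α:ℂ)*ω w)/((1:ℂ) - (α:ℂ)*ω w)).re := by
    intro w hw
    rw [(hAB w hw).1, (hAB w hw).2, Complex.add_re, Complex.conj_re]
    have hone' := hone w hw
    have hiden : (((1:ℂ) + (α:ℂ)*ω w)/((1:ℂ) - (α:ℂ)*ω w))
        = ((1:ℂ) - (α:ℂ)*ω w)⁻¹ + (α:ℂ)*ω w * ((1:ℂ) - (α:ℂ)*ω w)⁻¹ := by
      field_simp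
    rw [hiden, Complex.add_re]
  have hRepos : ∀ w ∈ Metric.ball (0:ℂ) 1,
      0 < (deriv H w * (E w)⁻¹ + (starRingEnd ℂ) (deriv G w * (E w)⁻¹)).re := by
    intro w hw
    rw [hRe w hw]
    exact hq _ (hω1 w hw)
  -- monotonicity of Re F along trajectories
  have hdiff : ∀ z₁ ∈ Metric.ball (0:ℂ) 1, ∀ v : ℂ, (v = 1 ∨ v = -1) → ∀ t : ℝ,
      0 < t → t ∈ LiftTimes φα z₁ v →
      (H (theLift φα z₁ v 0) + (starRingEnd ℂ) (G (theLift φα z₁ v 0))).re ≠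
        (H (theLift φα z₁ v t) + (starRingEnd ℂ) (G (theLift φα z₁ v t))).re := by
    intro z₁ hz₁ v hv t htpos htmem
    have hΓ := isLift_theLift hyp htmem
    set u : ℝ → ℝ :=
      fun s => (H (theLift φα z₁ v s) + (starRingEnd ℂ) (G (theLift φα z₁ v s))).re with hudef
    have humaps : ∀ s ∈ Icc (0:ℝ) t, theLift φα z₁ v s ∈ Metric.ball (0:ℂ) 1 :=
      fun s hs => (hΓ.2.2 s hs).1
    have hucont : ContinuousOn u (Icc 0 t) := by
      apply Complex.continuous_re.comp_continuousOn
      exact (hHd.continuousOn.comp hΓ.1 humaps).add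
        (Complex.continuous_conj.comp_continuousOn (hGd.continuousOn.comp hΓ.1 humaps))
    have huderiv : ∀ s ∈ Ioo (0:ℝ) t, HasDerivAt u
        (((deriv H (theLift φα z₁ v s) * ((E (theLift φα z₁ v s))⁻¹ * v))
          + (starRingEnd ℂ)
            (deriv G (theLift φα z₁ v s) * ((E (theLift φα z₁ v s))⁻¹ * v))).re) s := by
      intro s hs
      have hd := theLift_hasDerivAt hyp htmem hs
      have hw : theLift φα z₁ v s ∈ Metric.ball (0:ℂ) 1 := humaps s ⟨hs.1.le, hs.2.le⟩
      have hH1 : HasDerivAt (fun s' => H (theLift φα z₁ v s'))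
          (deriv H (theLift φα z₁ v s) * ((E (theLift φα z₁ v s))⁻¹ * v)) s :=
        HasDerivAt.comp s
          ((hHd.differentiableAt (Metric.isOpen_ball.mem_nhds hw)).hasDerivAt) hd
      have hG1 : HasDerivAt (fun s' => G (theLift φα z₁ v s'))
          (deriv G (theLift φα z₁ v s) * ((E (theLift φα z₁ v s))⁻¹ * v)) s :=
        HasDerivAt.comp s
          ((hGd.differentiableAt (Metric.isOpen_ball.mem_nhds hw)).hasDerivAt) hd
      have hG2 : HasDerivAt (fun s' => (starRingEnd ℂ) (G (theLift φα z₁ v s')))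
          ((starRingEnd ℂ)
            (deriv G (theLift φα z₁ v s) * ((E (theLift φα z₁ v s))⁻¹ * v))) s := by
        have h0 := Complex.conjCLE.hasFDerivAt.comp_hasDerivAt s hG1
        exact h0
      have hsum := hH1.add hG2
      have h0 := Complex.reCLM.hasFDerivAt.comp_hasDerivAt s hsum
      exact h0
    rcases hv with rfl | rfl
    · have hmono : StrictMonoOn u (Icc 0 t) := by
        apply strictMonoOn_of_deriv_pos (convex_Icc _ _) hucont
        intro s hs
        rw [interior_Icc] at hs
        rw [(huderiv s hs).deriv]
        have hw := humaps s ⟨hs.1.le, hs.2.le⟩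
        have hx := hRepos _ hw
        simpa only [mul_one] using hx
      exact ne_of_lt (hmono (left_mem_Icc.mpr htpos.le) (right_mem_Icc.mpr htpos.le) htpos)
    · have hanti : StrictAntiOn u (Icc 0 t) := by
        apply strictAntiOn_of_deriv_neg (convex_Icc _ _) hucont
        intro s hs
        rw [interior_Icc] at hs
        rw [(huderiv s hs).deriv]
        have hw := humaps s ⟨hs.1.le, hs.2.le⟩
        have hx := hRepos _ hw
        have harith : deriv H (theLift φα z₁ (-1) s) * ((E (theLift φα z₁ (-1) s))⁻¹ * (-1))
            + (starRingEnd ℂ)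
              (deriv G (theLift φα z₁ (-1) s) * ((E (theLift φα z₁ (-1) s))⁻¹ * (-1)))
            = -((deriv H (theLift φα z₁ (-1) s) * (E (theLift φα z₁ (-1) s))⁻¹)
              + (starRingEnd ℂ)
                (deriv G (theLift φα z₁ (-1) s) * (E (theLift φα z₁ (-1) s))⁻¹)) := by
          rw [show deriv G (theLift φα z₁ (-1) s) * ((E (theLift φα z₁ (-1) s))⁻¹ * (-1))
              = -(deriv G (theLift φα z₁ (-1) s) * (E (theLift φα z₁ (-1) s))⁻¹) by ring,
            map_neg]
          ring
        rw [harith, Complex.neg_re]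
        linarith [hx]
      exact ne_of_gt (hanti (left_mem_Icc.mpr htpos.le) (right_mem_Icc.mpr htpos.le) htpos)
  constructor
  · -- injectivity
    intro z₁ hz₁ z₂ hz₂ hF
    by_contra hne12
    have him : (φα z₁).im = (φα z₂).im := by
      have h0 := congrArg Complex.im hF
      simp only at h0
      rw [hIm z₁ hz₁, hIm z₂ hz₂] at h0
      exact h0
    obtain ⟨v, hv, t, ht0, γ, hγ, hγt⟩ := hsame z₁ hz₁ z₂ hz₂ him
    have htpos : 0 < t := by
      rcases eq_or_lt_of_le ht0 with h0 | h0
      · exfalso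
        apply hne12
        rw [← hγt, ← h0, hγ.2.1]
      · exact h0
    have htmem : t ∈ LiftTimes φα z₁ v := ⟨ht0, γ, hγ⟩
    have hΓ := isLift_theLift hyp htmem
    have hΓ0 : theLift φα z₁ v 0 = z₁ := hΓ.2.1
    have hΓt : theLift φα z₁ v t = z₂ := by
      rw [lift_unique hyp hΓ hγ ⟨ht0, le_rfl⟩, hγt]
    have hd := hdiff z₁ hz₁ v hv t htpos htmem
    rw [hΓ0, hΓt] at hd
    apply hd
    have h0 := congrArg Complex.re hF
    simpa using h0
  · -- preconnected sections
    intro c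
    by_cases hLc : ∃ z₁ ∈ Metric.ball (0:ℂ) 1, (φα z₁).im = c
    · obtain ⟨z₁, hz₁, hc⟩ := hLc
      have hLceq : {z : ℂ | z ∈ Metric.ball (0:ℂ) 1 ∧ (φα z).im = c} = Traj φα z₁ := by
        ext z
        constructor
        · rintro ⟨hzB, hzim⟩
          exact hsame z₁ hz₁ z hzB (by rw [hc, hzim])
        · rintro ⟨v, hv, t, ht, γ, hγ, rfl⟩
          refine ⟨(hγ.2.2 t ⟨ht, le_rfl⟩).1, ?_⟩
          rw [(hγ.2.2 t ⟨ht, le_rfl⟩).2]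
          rcases hv with rfl | rfl <;> simp [← hc]
      have htrajconn : IsPreconnected (Traj φα z₁) := by
        have hug : ⋃₀ {S : Set ℂ | ∃ v : ℂ, (v = 1 ∨ v = -1) ∧ ∃ t : ℝ, 0 ≤ t ∧
            ∃ γ, IsLift φα z₁ v t γ ∧ S = γ '' Icc 0 t} = Traj φα z₁ := by
          apply subset_antisymm
          · rintro z ⟨S, ⟨v, hv, t, ht, γ, hγ, rfl⟩, hzS⟩
            obtain ⟨s, hs, rfl⟩ := hzS
            exact mem_traj_of_lift hv hs.1 (hγ.restrict hs)
          · rintro z ⟨v, hv, t, ht, γ, hγ, rfl⟩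
            exact ⟨γ '' Icc 0 t, ⟨v, hv, t, ht, γ, hγ, rfl⟩,
              mem_image_of_mem γ ⟨ht, le_rfl⟩⟩
        rw [← hug]
        apply isPreconnected_sUnion z₁
        · rintro S ⟨v, hv, t, ht, γ, hγ, rfl⟩
          have h0 : γ 0 ∈ γ '' Icc 0 t := mem_image_of_mem γ ⟨le_rfl, ht⟩
          rwa [hγ.2.1] at h0
        · rintro S ⟨v, hv, t, ht, γ, hγ, rfl⟩
          exact isPreconnected_Icc.image γ hγ.1
      have hseteq : ((fun z => H z + (starRingEnd ℂ) (G z)) '' Metric.ball 0 1)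
          ∩ {w : ℂ | w.im = c}
          = (fun z => H z + (starRingEnd ℂ) (G z)) ''
              {z : ℂ | z ∈ Metric.ball (0:ℂ) 1 ∧ (φα z).im = c} := by
        ext w
        constructor
        · rintro ⟨⟨z, hzB, rfl⟩, hwim⟩
          have hwim' : (H z + (starRingEnd ℂ) (G z)).im = c := hwim
          refine ⟨z, ⟨hzB, ?_⟩, rfl⟩
          rw [← hIm z hzB]
          exact hwim'
        · rintro ⟨z, ⟨hzB, hzim⟩, rfl⟩
          refine ⟨⟨z, hzB, rfl⟩, ?_⟩
          show (H z + (starRingEnd ℂ) (G z)).im = c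
          rw [hIm z hzB]
          exact hzim
      rw [hseteq, hLceq]
      have hsubB : Traj φα z₁ ⊆ Metric.ball (0:ℂ) 1 := by
        rw [← hLceq]
        exact fun z hz => hz.1
      exact htrajconn.image _
        ((hHd.continuousOn.add
          (Complex.continuous_conj.comp_continuousOn hGd.continuousOn)).mono hsubB)
    · push_neg at hLc
      have hempty : ((fun z => H z + (starRingEnd ℂ) (G z)) '' Metric.ball 0 1)
          ∩ {w : ℂ | w.im = c} = ∅ := by
        ext w
        simp only [mem_inter_iff, mem_image, mem_setOf_eq, mem_empty_iff_false, iff_false,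
          not_and]
        rintro ⟨z, hzB, rfl⟩
        intro hwim
        have hwim' : (H z + (starRingEnd ℂ) (G z)).im = c := hwim
        apply hLc z hzB
        rw [← hIm z hzB]
        exact hwim'
      rw [hempty]
      exact isPreconnected_empty
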